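/- arXiv:2103.07816 — 3 statements merged into one kernel-verified Lean document; each statement's English description precedes it below -/
import Mathlib

section
/- Suppose the coupled Riccati equations hold: $2k^2 t R_n'(t) = 2[k^2(n+\alpha+1)+t]R_n - 2r_n(2n+2\alpha+1+R_n) + k^2 R_n^2 + 2(2n+2\alpha+1)t$ and $2k^2 t r_n'(t) = 2[k^2(n+\alpha+1)+t]r_n - \frac{2(2n+2\alpha+1)(r_n^2-2tr_n)}{R_n} - r_n^2 - 2k^2 n t$, with $R_n(t) \neq 0$, $2n+2\alpha+1+R_n(t) \neq 0$, $k \neq 0$, $t > 0$. Then, solving the first equation for $r_n$ and substituting into the second, $R_n$ satisfies: $8k^4 t^2 R_n(2n+2\alpha+1+R_n)R_n'' - 4k^4 t^2(4n+4\alpha+2+3R_n)(R_n')^2 + 8k^4 t R_n(2n+2\alpha+1+R_n)R_n' - k^4 R_n^5 - 2k^4(2n+2\alpha+1)R_n^4 - 4[k^4(n+\alpha)(n+\alpha+1) - t^2 - 2k^2\alpha t]R_n^3 + 16t(2n+2\alpha+1)(t+k^2\alpha)R_n^2 + 4t(2n+2\alpha+1)^2(5t+2k^2\alpha)R_n + 8t^2(2n+2\alpha+1)^3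 = 0$. -/
/-!
Solving the first Riccati equation gives `r = N / D` with `D = 2 (2n + 2α + 1 + R)` and `N` a
polynomial in `t, R, R'`. The quotient rule expresses `r'` through `R, R', R''`, and substituting
`r` and `r'` into the second Riccati equation (multiplied by `R D²`) leaves the second-order
equation for `R`.
-/

open Filter Topology

def riccatiNum (k α n t R R₁ : ℝ) : ℝ :=
  2 * (k ^ 2 * (n + α + 1) + t) * R + k ^ 2 * R ^ 2 + 2 * (2 * n + 2 * α + 1) * t -
    2 * k ^ 2 * t * R₁

theorem HasDerivAt.mul_sq_eq_of_eventuallyEq_div {f N D : ℝ → ℝ} {f' N' D' t : ℝ}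
    (hf : HasDerivAt f f' t) (hN : HasDerivAt N N' t) (hD : HasDerivAt D D' t)
    (hD0 : D t ≠ 0) (hfND : f =ᶠ[𝓝 t] fun s => N s / D s) :
    f' * D t ^ 2 = N' * D t - N t * D' := by
  rw [hf.unique ((hN.div hD hD0).congr_of_eventuallyEq hfND),
    div_mul_cancel₀ _ (pow_ne_zero 2 hD0)]

theorem hasDerivAt_riccatiNum {R R' : ℝ → ℝ} {R₂ : ℝ} (k α n t : ℝ)
    (hR : HasDerivAt R (R' t) t) (hR' : HasDerivAt R' R₂ t) :
    HasDerivAt (fun s => riccatiNum k α n s (R s) (R' s))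
      (2 * (k ^ 2 * (n + α + 1) + t) * R' t + 2 * R t + 2 * k ^ 2 * R t * R' t +
        2 * (2 * n + 2 * α + 1) - 2 * k ^ 2 * R' t - 2 * k ^ 2 * t * R₂) t := by
  have hlin : HasDerivAt (fun s => 2 * (k ^ 2 * (n + α + 1) + s)) (2 * 1) t :=
    ((hasDerivAt_id t).const_add (k ^ 2 * (n + α + 1))).const_mul 2
  have htR' : HasDerivAt (fun s => 2 * k ^ 2 * s * R' s)
      (2 * k ^ 2 * 1 * R' t + 2 * k ^ 2 * t * R₂) t :=
    ((hasDerivAt_id t).const_mul (2 * k ^ 2)).mul hR'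
  have hsq : HasDerivAt (fun s => k ^ 2 * R s ^ 2) (k ^ 2 * (↑2 * R t ^ 1 * R' t)) t :=
    (hR.pow 2).const_mul (k ^ 2)
  refine ((((hlin.mul hR).add hsq).add
    ((hasDerivAt_id t).const_mul (2 * (2 * n + 2 * α + 1)))).sub htR').congr_deriv ?_
  ring

theorem secondOrder_eq_zero_of_riccati {k α n t R R₁ R₂ r r₁ : ℝ} (hR : R ≠ 0)
    (hr : r * (2 * (2 * n + 2 * α + 1 + R)) = riccatiNum k α n t R R₁)
    (hr₁ : r₁ * (2 * (2 * n + 2 * α + 1 + R)) ^ 2 =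
      (2 * (k ^ 2 * (n + α + 1) + t) * R₁ + 2 * R + 2 * k ^ 2 * R * R₁ +
          2 * (2 * n + 2 * α + 1) - 2 * k ^ 2 * R₁ - 2 * k ^ 2 * t * R₂) *
          (2 * (2 * n + 2 * α + 1 + R)) -
        riccatiNum k α n t R R₁ * (2 * R₁))
    (hric : 2 * k ^ 2 * t * r₁ =
      2 * (k ^ 2 * (n + α + 1) + t) * r - 2 * (2 * n + 2 * α + 1) * (r ^ 2 - 2 * t * r) / R -
        r ^ 2 - 2 * k ^ 2 * n * t) :
    8 * k ^ 4 * t ^ 2 * R * (2 * n + 2 * α + 1 + R) * R₂ -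
        4 * k ^ 4 * t ^ 2 * (4 * n + 4 * α + 2 + 3 * R) * R₁ ^ 2 +
        8 * k ^ 4 * t * R * (2 * n + 2 * α + 1 + R) * R₁ -
        k ^ 4 * R ^ 5 - 2 * k ^ 4 * (2 * n + 2 * α + 1) * R ^ 4 -
        4 * (k ^ 4 * (n + α) * (n + α + 1) - t ^ 2 - 2 * k ^ 2 * α * t) * R ^ 3 +
        16 * t * (2 * n + 2 * α + 1) * (t + k ^ 2 * α) * R ^ 2 +
        4 * t * (2 * n + 2 * α + 1) ^ 2 * (5 * t + 2 * k ^ 2 * α) * R +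
        8 * t ^ 2 * (2 * n + 2 * α + 1) ^ 3 = 0 := by
  have hricR : 2 * k ^ 2 * t * r₁ * R =
      2 * (k ^ 2 * (n + α + 1) + t) * r * R - 2 * (2 * n + 2 * α + 1) * (r ^ 2 - 2 * t * r) -
        r ^ 2 * R - 2 * k ^ 2 * n * t * R := by
    rw [hric]
    field_simp
  set D := 2 * (2 * n + 2 * α + 1 + R)
  set N := riccatiNum k α n t R R₁
  -- `r₁` cancels between the first two terms; `r` (of degree 2) is then removed using `r D = N`.
  linear_combination (norm := skip) (-D ^ 2) * hricR + (2 * k ^ 2 * t * R) * hr₁ +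
    (-(2 * (k ^ 2 * (n + α + 1) + t) * R + 4 * t * (2 * n + 2 * α + 1)) * D +
      (2 * (2 * n + 2 * α + 1) + R) * (r * D + N)) * hr
  simp only [D, N, riccatiNum]
  ring

theorem stmt_8_general (R R' R'' r r' : ℝ → ℝ) (k α : ℝ) (n : ℕ)
    (hRd : ∀ t : ℝ, 0 < t → HasDerivAt R (R' t) t)
    (hRd2 : ∀ t : ℝ, 0 < t → HasDerivAt R' (R'' t) t)
    (hrd : ∀ t : ℝ, 0 < t → HasDerivAt r (r' t) t)
    (hRne : ∀ t : ℝ, 0 < t → R t ≠ 0)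
    (hden : ∀ t : ℝ, 0 < t → 2 * n + 2 * α + 1 + R t ≠ 0)
    (hric2 : ∀ t : ℝ, 0 < t →
      2 * k ^ 2 * t * r' t =
        2 * (k ^ 2 * (n + α + 1) + t) * r t -
          2 * (2 * n + 2 * α + 1) * ((r t) ^ 2 - 2 * t * r t) / R t -
          (r t) ^ 2 - 2 * k ^ 2 * n * t)
    (hrsol : ∀ t : ℝ, 0 < t →
      r t = (2 * (k ^ 2 * (n + α + 1) + t) * R t + k ^ 2 * (R t) ^ 2 +
              2 * (2 * n + 2 * α + 1) * t - 2 * k ^ 2 * t * R' t) /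
            (2 * (2 * n + 2 * α + 1 + R t))) :
    ∀ t : ℝ, 0 < t →
      8 * k ^ 4 * t ^ 2 * R t * (2 * n + 2 * α + 1 + R t) * R'' t -
        4 * k ^ 4 * t ^ 2 * (4 * n + 4 * α + 2 + 3 * R t) * (R' t) ^ 2 +
        8 * k ^ 4 * t * R t * (2 * n + 2 * α + 1 + R t) * R' t -
        k ^ 4 * (R t) ^ 5 - 2 * k ^ 4 * (2 * n + 2 * α + 1) * (R t) ^ 4 -
        4 * (k ^ 4 * (n + α) * (n + α + 1) - t ^ 2 - 2 * k ^ 2 * α * t) * (R t) ^ 3 +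
        16 * t * (2 * n + 2 * α + 1) * (t + k ^ 2 * α) * (R t) ^ 2 +
        4 * t * (2 * n + 2 * α + 1) ^ 2 * (5 * t + 2 * k ^ 2 * α) * R t +
        8 * t ^ 2 * (2 * n + 2 * α + 1) ^ 3 = 0 := by
  intro t ht
  have hD : HasDerivAt (fun s => 2 * (2 * n + 2 * α + 1 + R s)) (2 * R' t) t := by
    simpa using ((hRd t ht).const_add (2 * n + 2 * α + 1 : ℝ)).const_mul 2
  have hD0 : 2 * (2 * n + 2 * α + 1 + R t) ≠ 0 := mul_ne_zero two_ne_zero (hden t ht)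
  have hrND : r =ᶠ[𝓝 t]
      fun s => riccatiNum k α n s (R s) (R' s) / (2 * (2 * n + 2 * α + 1 + R s)) :=
    eventuallyEq_of_mem (Ioi_mem_nhds ht) hrsol
  refine secondOrder_eq_zero_of_riccati (hRne t ht) ?_
    ((hrd t ht).mul_sq_eq_of_eventuallyEq_div
      (hasDerivAt_riccatiNum k α n t (hRd t ht) (hRd2 t ht)) hD hD0 hrND) (hric2 t ht)
  rw [hrsol t ht, div_mul_cancel₀ _ hD0, riccatiNum]

theorem stmt_8 (R R' R'' r r' : ℝ → ℝ) (k α : ℝ) (n : ℕ)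
    (hk : k ≠ 0) (hα : 0 < α)
    (hRd : ∀ t : ℝ, 0 < t → HasDerivAt R (R' t) t)
    (hRd2 : ∀ t : ℝ, 0 < t → HasDerivAt R' (R'' t) t)
    (hrd : ∀ t : ℝ, 0 < t → HasDerivAt r (r' t) t)
    (hRne : ∀ t : ℝ, 0 < t → R t ≠ 0)
    (hden : ∀ t : ℝ, 0 < t → 2 * n + 2 * α + 1 + R t ≠ 0)
    (hric1 : ∀ t : ℝ, 0 < t →
      2 * k ^ 2 * t * R' t =
        2 * (k ^ 2 * (n + α + 1) + t) * R t - 2 * r t * (2 * n + 2 * α + 1 + R t) +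
          k ^ 2 * (R t) ^ 2 + 2 * (2 * n + 2 * α + 1) * t)
    (hric2 : ∀ t : ℝ, 0 < t →
      2 * k ^ 2 * t * r' t =
        2 * (k ^ 2 * (n + α + 1) + t) * r t -
          2 * (2 * n + 2 * α + 1) * ((r t) ^ 2 - 2 * t * r t) / R t -
          (r t) ^ 2 - 2 * k ^ 2 * n * t)
    (hrsol : ∀ t : ℝ, 0 < t →
      r t = (2 * (k ^ 2 * (n + α + 1) + t) * R t + k ^ 2 * (R t) ^ 2 +
              2 * (2 * n + 2 * α + 1) * t - 2 * k ^ 2 * t * R' t) /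
            (2 * (2 * n + 2 * α + 1 + R t))) :
    ∀ t : ℝ, 0 < t →
      8 * k ^ 4 * t ^ 2 * R t * (2 * n + 2 * α + 1 + R t) * R'' t -
        4 * k ^ 4 * t ^ 2 * (4 * n + 4 * α + 2 + 3 * R t) * (R' t) ^ 2 +
        8 * k ^ 4 * t * R t * (2 * n + 2 * α + 1 + R t) * R' t -
        k ^ 4 * (R t) ^ 5 - 2 * k ^ 4 * (2 * n + 2 * α + 1) * (R t) ^ 4 -
        4 * (k ^ 4 * (n + α) * (n + α + 1) - t ^ 2 - 2 * k ^ 2 * α * t) * (R t) ^ 3 +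
        16 * t * (2 * n + 2 * α + 1) * (t + k ^ 2 * α) * (R t) ^ 2 +
        4 * t * (2 * n + 2 * α + 1) ^ 2 * (5 * t + 2 * k ^ 2 * α) * R t +
        8 * t ^ 2 * (2 * n + 2 * α + 1) ^ 3 = 0 :=
  stmt_8_general R R' R'' r r' k α n hRd hRd2 hrd hRne hden hric2 hrsol
end

section
/- Let $R : (0,\infty) \to \mathbb{R}$ be twice differentiable satisfying $8k^4 t^2 R(2c+R)R'' - 4k^4 t^2(4c+3R)(R')^2 + 8k^4 t R(2c+R)R' - k^4 R^5 - 2k^4(2c)R^4 - 4[k^4(c-\tfrac12)(c+\tfrac12) - t^2 - 2k^2\alpha t]R^3 + 16t(2c)(t+k^2\alpha)R^2 + 4t(2c)^2(5t+2k^2\alpha)R + 8t^2(2c)^3 = 0$ where $c = n+\alpha+\tfrac12$ and $2c = 2n+2\alpha+1$. Define $\Phi(t) = \frac{R(t)+2c}{2c}$. Assume $\Phi(t) \neq 0$, $\Phi(t) \neq 1$, $k \neq 0$, $2c \neq 0$ on the domain. Then $\Phi$ satisfies the Painlevé V equation $\Phi'' = \frac{(3\Phi-1)(\Phi')^2}{2\Phi(\Phi-1)}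 - \frac{\Phi'}{t} + \frac{(\Phi-1)^2}{t^2}\left(\gamma\Phi + \frac{\delta}{\Phi}\right) + \frac{\varepsilon\Phi}{t} + \frac{\eta\Phi(\Phi+1)}{\Phi-1}$ with $\gamma = \frac{(2n+2\alpha+1)^2}{8}$, $\delta = -\frac18$, $\varepsilon = -\frac{\alpha}{k^2}$, $\eta = -\frac{1}{2k^4}$. -/
/-!
Substituting `R = 2c (Φ - 1)` turns the left-hand side of the equation for `R` into `(2c)³` times
a polynomial in `t, Φ, Φ', Φ''` that is linear in `Φ''` with leading coefficient `8 k⁴ t² Φ (Φ - 1)`.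
Dividing by that coefficient gives Painlevé V.
-/

/-- The left-hand side of the second-order equation satisfied by `R = Rₙ(t)`. -/
noncomputable def jacobiODE (k α c t R R' R'' : ℝ) : ℝ :=
  8 * k ^ 4 * t ^ 2 * R * (2 * c + R) * R'' -
    4 * k ^ 4 * t ^ 2 * (4 * c + 3 * R) * R' ^ 2 +
    8 * k ^ 4 * t * R * (2 * c + R) * R' -
    k ^ 4 * R ^ 5 - 2 * k ^ 4 * (2 * c) * R ^ 4 -
    4 * (k ^ 4 * (c - 1 / 2) * (c + 1 / 2) - t ^ 2 - 2 * k ^ 2 * α * t) * R ^ 3 +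
    16 * t * (2 * c) * (t + k ^ 2 * α) * R ^ 2 +
    4 * t * (2 * c) ^ 2 * (5 * t + 2 * k ^ 2 * α) * R +
    8 * t ^ 2 * (2 * c) ^ 3

/-- Painlevé V for `Φ`, cleared of denominators. -/
def painleveVPoly (k α c t Φ Φ' Φ'' : ℝ) : ℝ :=
  8 * k ^ 4 * t ^ 2 * Φ * (Φ - 1) * Φ'' - 4 * k ^ 4 * t ^ 2 * (3 * Φ - 1) * Φ' ^ 2 +
    8 * k ^ 4 * t * Φ * (Φ - 1) * Φ' - k ^ 4 * (2 * c) ^ 2 * Φ ^ 2 * (Φ - 1) ^ 3 +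
    k ^ 4 * (Φ - 1) ^ 3 + 4 * t ^ 2 * Φ ^ 2 * (Φ + 1) + 8 * k ^ 2 * α * t * Φ ^ 2 * (Φ - 1)

theorem jacobiODE_shift_scale (k α c t Φ Φ' Φ'' : ℝ) :
    jacobiODE k α c t (2 * c * (Φ - 1)) (2 * c * Φ') (2 * c * Φ'') =
      (2 * c) ^ 3 * painleveVPoly k α c t Φ Φ' Φ'' := by
  unfold jacobiODE painleveVPoly
  ring

theorem painleveV_of_painleveVPoly_eq_zero {k α c t Φ Φ' Φ'' : ℝ} (hk : k ≠ 0) (ht : t ≠ 0)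
    (hΦ0 : Φ ≠ 0) (hΦ1 : Φ ≠ 1) (h : painleveVPoly k α c t Φ Φ' Φ'' = 0) :
    Φ'' = (3 * Φ - 1) * Φ' ^ 2 / (2 * Φ * (Φ - 1)) - Φ' / t +
      (Φ - 1) ^ 2 / t ^ 2 * ((2 * c) ^ 2 / 8 * Φ + -(1 / 8) / Φ) + -(α / k ^ 2) * Φ / t +
      -(1 / (2 * k ^ 4)) * Φ * (Φ + 1) / (Φ - 1) := by
  have hΦ1' : Φ - 1 ≠ 0 := sub_ne_zero.mpr hΦ1
  unfold painleveVPoly at h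
  field_simp
  linear_combination 2 * h

theorem stmt_9_general (R R' R'' : ℝ → ℝ) (k α : ℝ) (n : ℕ)
    (hk : k ≠ 0)
    (c : ℝ) (hc : c = (n : ℝ) + α + 1 / 2) (hcne : 2 * c ≠ 0)
    (hode : ∀ t : ℝ, 0 < t →
      8 * k ^ 4 * t ^ 2 * R t * (2 * c + R t) * R'' t -
        4 * k ^ 4 * t ^ 2 * (4 * c + 3 * R t) * (R' t) ^ 2 +
        8 * k ^ 4 * t * R t * (2 * c + R t) * R' t -
        k ^ 4 * (R t) ^ 5 - 2 * k ^ 4 * (2 * c) * (R t) ^ 4 -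
        4 * (k ^ 4 * (c - 1 / 2) * (c + 1 / 2) - t ^ 2 - 2 * k ^ 2 * α * t) * (R t) ^ 3 +
        16 * t * (2 * c) * (t + k ^ 2 * α) * (R t) ^ 2 +
        4 * t * (2 * c) ^ 2 * (5 * t + 2 * k ^ 2 * α) * R t +
        8 * t ^ 2 * (2 * c) ^ 3 = 0)
    (Φ Φ' Φ'' : ℝ → ℝ)
    (hΦ : ∀ t : ℝ, Φ t = (R t + 2 * c) / (2 * c))
    (hΦ' : ∀ t : ℝ, Φ' t = R' t / (2 * c))
    (hΦ'' : ∀ t : ℝ, Φ'' t = R'' t / (2 * c))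
    (hΦ0 : ∀ t : ℝ, 0 < t → Φ t ≠ 0)
    (hΦ1 : ∀ t : ℝ, 0 < t → Φ t ≠ 1)
    (γ δ ε η : ℝ)
    (hγ : γ = (2 * (n : ℝ) + 2 * α + 1) ^ 2 / 8)
    (hδ : δ = -(1 / 8))
    (hε : ε = -(α / k ^ 2))
    (hη : η = -(1 / (2 * k ^ 4))) :
    ∀ t : ℝ, 0 < t →
      Φ'' t = (3 * Φ t - 1) * (Φ' t) ^ 2 / (2 * Φ t * (Φ t - 1)) - Φ' t / t +
        (Φ t - 1) ^ 2 / t ^ 2 * (γ * Φ t + δ / Φ t) + ε * Φ t / t +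
        η * Φ t * (Φ t + 1) / (Φ t - 1) := by
  intro t ht
  have hR : R t = 2 * c * (Φ t - 1) := by rw [hΦ t, mul_sub, mul_div_cancel₀ _ hcne]; ring
  have hR' : R' t = 2 * c * Φ' t := by rw [hΦ' t, mul_div_cancel₀ _ hcne]
  have hR'' : R'' t = 2 * c * Φ'' t := by rw [hΦ'' t, mul_div_cancel₀ _ hcne]
  have hpoly : painleveVPoly k α c t (Φ t) (Φ' t) (Φ'' t) = 0 := by
    have h : jacobiODE k α c t (R t) (R' t) (R'' t) = 0 := hode t ht
    rw [hR, hR', hR'', jacobiODE_shift_scale] at h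
    exact (mul_eq_zero.mp h).resolve_left (pow_ne_zero 3 hcne)
  have hγc : γ = (2 * c) ^ 2 / 8 := by rw [hγ, hc]; ring
  rw [hγc, hδ, hε, hη]
  exact painleveV_of_painleveVPoly_eq_zero hk ht.ne' (hΦ0 t ht) (hΦ1 t ht) hpoly

theorem stmt_9 (R R' R'' : ℝ → ℝ) (k α : ℝ) (n : ℕ)
    (hk : k ≠ 0) (hα : 0 < α)
    (c : ℝ) (hc : c = (n : ℝ) + α + 1 / 2) (hcne : 2 * c ≠ 0)
    (hRd : ∀ t : ℝ, 0 < t → HasDerivAt R (R' t) t)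
    (hRd2 : ∀ t : ℝ, 0 < t → HasDerivAt R' (R'' t) t)
    (hode : ∀ t : ℝ, 0 < t →
      8 * k ^ 4 * t ^ 2 * R t * (2 * c + R t) * R'' t -
        4 * k ^ 4 * t ^ 2 * (4 * c + 3 * R t) * (R' t) ^ 2 +
        8 * k ^ 4 * t * R t * (2 * c + R t) * R' t -
        k ^ 4 * (R t) ^ 5 - 2 * k ^ 4 * (2 * c) * (R t) ^ 4 -
        4 * (k ^ 4 * (c - 1 / 2) * (c + 1 / 2) - t ^ 2 - 2 * k ^ 2 * α * t) * (R t) ^ 3 +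
        16 * t * (2 * c) * (t + k ^ 2 * α) * (R t) ^ 2 +
        4 * t * (2 * c) ^ 2 * (5 * t + 2 * k ^ 2 * α) * R t +
        8 * t ^ 2 * (2 * c) ^ 3 = 0)
    (Φ Φ' Φ'' : ℝ → ℝ)
    (hΦ : ∀ t : ℝ, Φ t = (R t + 2 * c) / (2 * c))
    (hΦ' : ∀ t : ℝ, Φ' t = R' t / (2 * c))
    (hΦ'' : ∀ t : ℝ, Φ'' t = R'' t / (2 * c))
    (hΦ0 : ∀ t : ℝ, 0 < t → Φ t ≠ 0)
    (hΦ1 : ∀ t : ℝ, 0 < t → Φ t ≠ 1)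
    (γ δ ε η : ℝ)
    (hγ : γ = (2 * (n : ℝ) + 2 * α + 1) ^ 2 / 8)
    (hδ : δ = -(1 / 8))
    (hε : ε = -(α / k ^ 2))
    (hη : η = -(1 / (2 * k ^ 4))) :
    ∀ t : ℝ, 0 < t →
      Φ'' t = (3 * Φ t - 1) * (Φ' t) ^ 2 / (2 * Φ t * (Φ t - 1)) - Φ' t / t +
        (Φ t - 1) ^ 2 / t ^ 2 * (γ * Φ t + δ / Φ t) + ε * Φ t / t +
        η * Φ t * (Φ t + 1) / (Φ t - 1) :=
  stmt_9_general R R' R'' k α n hk c hc hcne hode Φ Φ' Φ'' hΦ hΦ' hΦ'' hΦ0 hΦ1 γ δ ε η hγ hδ hε hη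
end

section
/- Suppose $2t\beta_n' = \frac{r_n^2 - 2tr_n}{k^2 R_n} - \beta_n R_n$ where $\beta_n$ is given by $\beta_n = \frac{2k^2(n+\alpha)r_n - 2k^2tn + 2tr_n - r_n^2}{k^2R_n(2n+2\alpha-1)} - \frac{(2n+2\alpha+1)(r_n^2 - 2tr_n)}{k^2R_n^2(2n+2\alpha-1)}$, and $r_n$ satisfies the Riccati equation $2k^2 t r_n' = 2[k^2(n+\alpha+1)+t]r_n - \frac{2(2n+2\alpha+1)(r_n^2-2tr_n)}{R_n} - r_n^2 - 2k^2nt$. If the factor $2(2n+2\alpha+1)(2t-r_n)r_n + (2tr_n + 2k^2nr_n + 2k^2\alpha r_n - r_n^2 - 2k^2nt)R_n$ is nonzero at some $t_0$, and $k \neq 0$, $R_n(t_0) \neq 0$, $2n+2\alpha-1 \neq 0$, then at $t_0$: $2k^2tR_n' = 2[k^2(n+\alpha+1)+t]R_n - 2r_n(2n+2\alpha+1+R_n) + k^2R_n^2 + 2(2n+2\alpha+1)t$. -/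
/-!
Clearing denominators in the formula for `β` gives the polynomial identity
`k² (2n+2α-1) R² β = N R - (2n+2α+1)(r² - 2tr)` on a neighbourhood of `t₀`, where `N` is the
numerator of the first fraction. Differentiating it at `t₀` and eliminating `β'` by its
differential equation, `r'` by the Riccati equation for `r`, and `β` by the identity itself,
leaves a polynomial identity of the form `F · (2k²tR' - Φ) = 0`, where `F` is the nonvanishing
factor and `2k²tR' = Φ` is the Riccati equation for `R`.
-/

open Filter Topology

theorem beta_cleared_of_eq {t r R β k n α : ℝ} (hk : k ≠ 0) (hR : R ≠ 0)
    (hd : 2 * n + 2 * α - 1 ≠ 0)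
    (hβ : β = (2 * k ^ 2 * (n + α) * r - 2 * k ^ 2 * t * n + 2 * t * r - r ^ 2) /
        (k ^ 2 * R * (2 * n + 2 * α - 1)) -
      (2 * n + 2 * α + 1) * (r ^ 2 - 2 * t * r) / (k ^ 2 * R ^ 2 * (2 * n + 2 * α - 1))) :
    k ^ 2 * (2 * n + 2 * α - 1) * (R ^ 2 * β) =
      (2 * k ^ 2 * (n + α) * r - 2 * k ^ 2 * t * n + 2 * t * r - r ^ 2) * R -
        (2 * n + 2 * α + 1) * (r ^ 2 - 2 * t * r) := by
  -- the form in which `field_simp` looks for the factor `2n + 2α - 1`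
  have hd' : 2 * (n + α) - 1 ≠ 0 := by rwa [mul_add]
  rw [hβ]
  field_simp

theorem beta_cleared_deriv {r R β : ℝ → ℝ} {r' R' β' k n α t₀ : ℝ}
    (hr : HasDerivAt r r' t₀) (hR : HasDerivAt R R' t₀) (hβ : HasDerivAt β β' t₀)
    (hcleared : ∀ᶠ t in 𝓝 t₀, k ^ 2 * (2 * n + 2 * α - 1) * (R t ^ 2 * β t) =
      (2 * k ^ 2 * (n + α) * r t - 2 * k ^ 2 * t * n + 2 * t * r t - r t ^ 2) * R t -
        (2 * n + 2 * α + 1) * (r t ^ 2 - 2 * t * r t)) :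
    k ^ 2 * (2 * n + 2 * α - 1) * (2 * R t₀ * R' * β t₀ + R t₀ ^ 2 * β') =
      (2 * k ^ 2 * (n + α) * r' - 2 * k ^ 2 * n + 2 * r t₀ + 2 * t₀ * r' - 2 * r t₀ * r') * R t₀ +
        (2 * k ^ 2 * (n + α) * r t₀ - 2 * k ^ 2 * t₀ * n + 2 * t₀ * r t₀ - r t₀ ^ 2) * R' -
        (2 * n + 2 * α + 1) * (2 * r t₀ * r' - 2 * r t₀ - 2 * t₀ * r') := by
  have htr := (hasDerivAt_id t₀).fun_mul hr
  have hlhs := ((hR.fun_pow 2).fun_mul hβ).const_mul (k ^ 2 * (2 * n + 2 * α - 1))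
  have hnum := (((hr.const_mul (2 * k ^ 2 * (n + α))).fun_sub
    ((hasDerivAt_id t₀).const_mul (2 * k ^ 2 * n))).fun_add (htr.const_mul 2)).fun_sub
    (hr.fun_pow 2)
  have hrhs := (hnum.fun_mul hR).fun_sub
    (((hr.fun_pow 2).fun_sub (htr.const_mul 2)).const_mul (2 * n + 2 * α + 1))
  have := hlhs.unique (hrhs.congr_of_eventuallyEq (hcleared.mono fun t ht => ?_))
  · simp only [id, Nat.cast_ofNat] at this
    linear_combination this
  · simp only [id]
    linear_combination ht

theorem riccati_R_of_beta {t r r' R R' β β' k n α : ℝ} (hk : k ≠ 0) (hR : R ≠ 0)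
    (hfac : 2 * (2 * n + 2 * α + 1) * (2 * t - r) * r +
      (2 * t * r + 2 * k ^ 2 * n * r + 2 * k ^ 2 * α * r - r ^ 2 - 2 * k ^ 2 * n * t) * R ≠ 0)
    (hβ : k ^ 2 * (2 * n + 2 * α - 1) * (R ^ 2 * β) =
      (2 * k ^ 2 * (n + α) * r - 2 * k ^ 2 * t * n + 2 * t * r - r ^ 2) * R -
        (2 * n + 2 * α + 1) * (r ^ 2 - 2 * t * r))
    (hdβ : k ^ 2 * (2 * n + 2 * α - 1) * (2 * R * R' * β + R ^ 2 * β') =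
      (2 * k ^ 2 * (n + α) * r' - 2 * k ^ 2 * n + 2 * r + 2 * t * r' - 2 * r * r') * R +
        (2 * k ^ 2 * (n + α) * r - 2 * k ^ 2 * t * n + 2 * t * r - r ^ 2) * R' -
        (2 * n + 2 * α + 1) * (2 * r * r' - 2 * r - 2 * t * r'))
    (hβ' : 2 * t * β' = (r ^ 2 - 2 * t * r) / (k ^ 2 * R) - β * R)
    (hric : 2 * k ^ 2 * t * r' =
      2 * (k ^ 2 * (n + α + 1) + t) * r - 2 * (2 * n + 2 * α + 1) * (r ^ 2 - 2 * t * r) / R -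
        r ^ 2 - 2 * k ^ 2 * n * t) :
    2 * k ^ 2 * t * R' =
      2 * (k ^ 2 * (n + α + 1) + t) * R - 2 * r * (2 * n + 2 * α + 1 + R) + k ^ 2 * R ^ 2 +
        2 * (2 * n + 2 * α + 1) * t := by
  field_simp at hβ' hric
  have key : (2 * (2 * n + 2 * α + 1) * (2 * t - r) * r +
      (2 * t * r + 2 * k ^ 2 * n * r + 2 * k ^ 2 * α * r - r ^ 2 - 2 * k ^ 2 * n * t) * R) *
      (2 * k ^ 2 * t * R' - (2 * (k ^ 2 * (n + α + 1) + t) * R - 2 * r * (2 * n + 2 * α + 1 + R) +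
        k ^ 2 * R ^ 2 + 2 * (2 * n + 2 * α + 1) * t)) = 0 := by
    linear_combination (2 * t * k ^ 2 * R) * hdβ + (k ^ 2 * (R ^ 2 - 4 * t * R')) * hβ -
      (k ^ 2 * R ^ 2 * (2 * n + 2 * α - 1)) * hβ' +
      ((2 * k ^ 2 * (n + α) + 2 * t - 2 * r) * R - (2 * n + 2 * α + 1) * (2 * r - 2 * t)) * hric
  exact sub_eq_zero.mp ((mul_eq_zero.mp key).resolve_left hfac)

theorem stmt_14_general (r r' R R' β β' : ℝ → ℝ) (k α : ℝ) (n : ℕ) (t₀ : ℝ)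
    (hk : k ≠ 0) (ht₀ : 0 < t₀)
    (hrd : ∀ t : ℝ, 0 < t → HasDerivAt r (r' t) t)
    (hRd : ∀ t : ℝ, 0 < t → HasDerivAt R (R' t) t)
    (hβd : ∀ t : ℝ, 0 < t → HasDerivAt β (β' t) t)
    (hβ : ∀ t : ℝ, 0 < t →
      β t = (2 * k ^ 2 * (n + α) * r t - 2 * k ^ 2 * t * n + 2 * t * r t - (r t) ^ 2) /
              (k ^ 2 * R t * (2 * n + 2 * α - 1)) -
            (2 * n + 2 * α + 1) * ((r t) ^ 2 - 2 * t * r t) /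
              (k ^ 2 * (R t) ^ 2 * (2 * n + 2 * α - 1)))
    (hβ' : ∀ t : ℝ, 0 < t →
      2 * t * β' t = ((r t) ^ 2 - 2 * t * r t) / (k ^ 2 * R t) - β t * R t)
    (hric : ∀ t : ℝ, 0 < t →
      2 * k ^ 2 * t * r' t =
        2 * (k ^ 2 * (n + α + 1) + t) * r t -
          2 * (2 * n + 2 * α + 1) * ((r t) ^ 2 - 2 * t * r t) / R t -
          (r t) ^ 2 - 2 * k ^ 2 * n * t)
    (hfac : 2 * (2 * n + 2 * α + 1) * (2 * t₀ - r t₀) * r t₀ +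
      (2 * t₀ * r t₀ + 2 * k ^ 2 * n * r t₀ + 2 * k ^ 2 * α * r t₀ -
        (r t₀) ^ 2 - 2 * k ^ 2 * n * t₀) * R t₀ ≠ 0)
    (hRne : R t₀ ≠ 0) (hden : 2 * (n : ℝ) + 2 * α - 1 ≠ 0) :
    2 * k ^ 2 * t₀ * R' t₀ =
      2 * (k ^ 2 * (n + α + 1) + t₀) * R t₀ -
        2 * r t₀ * (2 * n + 2 * α + 1 + R t₀) +
        k ^ 2 * (R t₀) ^ 2 + 2 * (2 * n + 2 * α + 1) * t₀ := by
  have hRne_near : ∀ᶠ t in 𝓝 t₀, R t ≠ 0 := (hRd t₀ ht₀).continuousAt.eventually_ne hRne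
  have hcleared : ∀ᶠ t in 𝓝 t₀, k ^ 2 * (2 * (n : ℝ) + 2 * α - 1) * (R t ^ 2 * β t) =
      (2 * k ^ 2 * (n + α) * r t - 2 * k ^ 2 * t * n + 2 * t * r t - r t ^ 2) * R t -
        (2 * n + 2 * α + 1) * (r t ^ 2 - 2 * t * r t) := by
    filter_upwards [hRne_near, eventually_gt_nhds ht₀] with t hRt ht
    exact beta_cleared_of_eq hk hRt hden (hβ t ht)
  exact riccati_R_of_beta hk hRne hfac hcleared.self_of_nhds
    (beta_cleared_deriv (hrd t₀ ht₀) (hRd t₀ ht₀) (hβd t₀ ht₀) hcleared)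
    (hβ' t₀ ht₀) (hric t₀ ht₀)

theorem stmt_14 (r r' R R' β β' : ℝ → ℝ) (k α : ℝ) (n : ℕ) (t₀ : ℝ)
    (hk : k ≠ 0) (hα : 0 < α) (ht₀ : 0 < t₀)
    (hrd : ∀ t : ℝ, 0 < t → HasDerivAt r (r' t) t)
    (hRd : ∀ t : ℝ, 0 < t → HasDerivAt R (R' t) t)
    (hβd : ∀ t : ℝ, 0 < t → HasDerivAt β (β' t) t)
    (hβ : ∀ t : ℝ, 0 < t →
      β t = (2 * k ^ 2 * (n + α) * r t - 2 * k ^ 2 * t * n + 2 * t * r t - (r t) ^ 2) /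
              (k ^ 2 * R t * (2 * n + 2 * α - 1)) -
            (2 * n + 2 * α + 1) * ((r t) ^ 2 - 2 * t * r t) /
              (k ^ 2 * (R t) ^ 2 * (2 * n + 2 * α - 1)))
    (hβ' : ∀ t : ℝ, 0 < t →
      2 * t * β' t = ((r t) ^ 2 - 2 * t * r t) / (k ^ 2 * R t) - β t * R t)
    (hric : ∀ t : ℝ, 0 < t →
      2 * k ^ 2 * t * r' t =
        2 * (k ^ 2 * (n + α + 1) + t) * r t -
          2 * (2 * n + 2 * α + 1) * ((r t) ^ 2 - 2 * t * r t) / R t -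
          (r t) ^ 2 - 2 * k ^ 2 * n * t)
    (hfac : 2 * (2 * n + 2 * α + 1) * (2 * t₀ - r t₀) * r t₀ +
      (2 * t₀ * r t₀ + 2 * k ^ 2 * n * r t₀ + 2 * k ^ 2 * α * r t₀ -
        (r t₀) ^ 2 - 2 * k ^ 2 * n * t₀) * R t₀ ≠ 0)
    (hRne : R t₀ ≠ 0) (hden : 2 * (n : ℝ) + 2 * α - 1 ≠ 0) :
    2 * k ^ 2 * t₀ * R' t₀ =
      2 * (k ^ 2 * (n + α + 1) + t₀) * R t₀ -
        2 * r t₀ * (2 * n + 2 * α + 1 + R t₀) +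
        k ^ 2 * (R t₀) ^ 2 + 2 * (2 * n + 2 * α + 1) * t₀ :=
  stmt_14_general r r' R R' β β' k α n t₀ hk ht₀ hrd hRd hβd hβ hβ' hric hfac hRne hden
end
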